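/- Any minimizer x* of the convexified multi-binary TV model satisfies K(x*) = 2^{−d} ∫_{C_d} K(X_η(x*)) dη, i.e., the objective value at x* equals the average objective value of its thresholded binary signals. -/

import Mathlib

open MeasureTheory

/-! ### Auxiliary lemmas -/

private lemma step_eq' (a c₁ c₂ : ℝ) : (fun t => if t < a then c₁ else c₂)
    = fun t => (Set.Iio a).indicator (fun _ => c₁ - c₂) t + c₂ := by
  funext t
  by_cases h : t < a <;> simp [Set.indicator, Set.mem_Iio, h]

private lemma step_integrable' (a c₁ c₂ : ℝ) :
    Integrable (fun t => if t < a then c₁ else c₂) (volume.restrict (Set.Icc (-1:ℝ) 1)) := by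
  rw [step_eq']
  have h1 : IntegrableOn (fun _ : ℝ => c₁ - c₂) (Set.Icc (-1:ℝ) 1) volume :=
    integrableOn_const (by rw [Real.volume_Icc]; exact ENNReal.ofReal_ne_top)
  have h2 : IntegrableOn (fun _ : ℝ => c₂) (Set.Icc (-1:ℝ) 1) volume :=
    integrableOn_const (by rw [Real.volume_Icc]; exact ENNReal.ofReal_ne_top)
  exact (h1.indicator measurableSet_Iio).add h2

private lemma step_integral' (a c₁ c₂ : ℝ) (h₁ : -1 ≤ a) (h₂ : a ≤ 1) :
    ∫ t in Set.Icc (-1:ℝ) 1, (if t < a then c₁ else c₂) = (a+1)*c₁ + (1-a)*c₂ := by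
  rw [step_eq']
  have h1 : IntegrableOn (fun _ : ℝ => c₁ - c₂) (Set.Icc (-1:ℝ) 1) volume :=
    integrableOn_const (by rw [Real.volume_Icc]; exact ENNReal.ofReal_ne_top)
  have h2 : IntegrableOn (fun _ : ℝ => c₂) (Set.Icc (-1:ℝ) 1) volume :=
    integrableOn_const (by rw [Real.volume_Icc]; exact ENNReal.ofReal_ne_top)
  rw [integral_add (h1.indicator measurableSet_Iio) h2,
    integral_indicator measurableSet_Iio, Measure.restrict_restrict measurableSet_Iio]
  have hset : Set.Iio a ∩ Set.Icc (-1:ℝ) 1 = Set.Ico (-1) a := by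
    ext t
    simp only [Set.mem_inter_iff, Set.mem_Iio, Set.mem_Icc, Set.mem_Ico]
    constructor
    · rintro ⟨h, h', _⟩; exact ⟨h', h⟩
    · rintro ⟨h, h'⟩; exact ⟨h', h, by linarith⟩
  rw [hset, integral_const, integral_const, measureReal_restrict_apply_univ,
    measureReal_restrict_apply_univ, Real.volume_real_Ico_of_le h₁,
    Real.volume_real_Icc_of_le (by norm_num), smul_eq_mul, smul_eq_mul]
  ring

private lemma abs_thresh' (a b t : ℝ) :
    |(if t < a then (1:ℝ) else -1) - (if t < b then 1 else -1)|
    = (if t < max a b then (1:ℝ) else -1) - (if t < min a b then 1 else -1) := by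
  rcases le_total a b with h | h <;>
    simp only [max_eq_right h, min_eq_left h, max_eq_left h, min_eq_right h] <;>
    split_ifs with h1 h2 <;> first | (exfalso; linarith) | norm_num

private lemma box_eq_pi' {d : ℕ} :
    Set.Icc (-1 : Fin d → ℝ) 1 = Set.pi Set.univ (fun _ => Set.Icc (-1:ℝ) 1) := by
  ext η
  simp [Set.mem_Icc, Pi.le_def, Set.mem_pi, forall_and]

private lemma integral_coord' {d : ℕ} (i : Fin d) (g : ℝ → ℝ) :
    ∫ η in Set.Icc (-1 : Fin d → ℝ) 1, g (η i)
      = 2^(d-1) * ∫ t in Set.Icc (-1:ℝ) 1, g t := by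
  rw [← integral_indicator measurableSet_Icc]
  have hrep : (Set.Icc (-1 : Fin d → ℝ) 1).indicator (fun η => g (η i))
      = fun η => ∏ j, (fun t => Set.indicator (Set.Icc (-1:ℝ) 1)
          (if j = i then g else fun _ => (1:ℝ)) t) (η j) := by
    funext η
    by_cases h : η ∈ Set.Icc (-1 : Fin d → ℝ) 1
    · rw [Set.indicator_of_mem h]
      have hmem : ∀ j, η j ∈ Set.Icc (-1:ℝ) 1 := by
        rw [box_eq_pi'] at h; exact fun j => h j (Set.mem_univ j)
      have : ∀ j ∈ Finset.univ, (fun t => Set.indicator (Set.Icc (-1:ℝ) 1)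
          (if j = i then g else fun _ => (1:ℝ)) t) (η j)
          = if j = i then g (η j) else 1 := by
        intro j _
        simp only [Set.indicator_of_mem (hmem j)]
        split_ifs <;> rfl
      rw [Finset.prod_congr rfl this, Finset.prod_ite_eq' Finset.univ i (fun j => g (η j)),
        if_pos (Finset.mem_univ i)]
    · rw [Set.indicator_of_notMem h]
      symm
      obtain ⟨j, hj⟩ : ∃ j, η j ∉ Set.Icc (-1:ℝ) 1 := by
        by_contra hc
        push_neg at hc
        exact h (by rw [box_eq_pi']; exact fun j _ => hc j)
      refine Finset.prod_eq_zero (Finset.mem_univ j) ?_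
      simp [Set.indicator_of_notMem hj]
  rw [hrep, volume_pi]
  beta_reduce
  rw [MeasureTheory.integral_fintype_prod_eq_prod (ι := Fin d)
    (f := fun j t => Set.indicator (Set.Icc (-1:ℝ) 1) (if j = i then g else fun _ => (1:ℝ)) t)]
  have hfac : ∀ j, (∫ t, Set.indicator (Set.Icc (-1:ℝ) 1)
      (if j = i then g else fun _ => (1:ℝ)) t)
      = if j = i then ∫ t in Set.Icc (-1:ℝ) 1, g t else 2 := by
    intro j
    split_ifs with h
    · rw [integral_indicator measurableSet_Icc]
    · rw [integral_indicator measurableSet_Icc, integral_const, measureReal_restrict_apply_univ,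
        Real.volume_real_Icc_of_le (by norm_num), smul_eq_mul, mul_one]
      norm_num
  rw [Finset.prod_congr rfl (fun j _ => hfac j),
    ← Finset.mul_prod_erase Finset.univ _ (Finset.mem_univ i), if_pos rfl]
  have : ∏ j ∈ Finset.univ.erase i, (if j = i then ∫ t in Set.Icc (-1:ℝ) 1, g t else 2)
      = 2^(d-1) := by
    rw [Finset.prod_congr rfl (fun j hj => if_neg (Finset.ne_of_mem_erase hj)),
      Finset.prod_const, Finset.card_erase_of_mem (Finset.mem_univ i), Finset.card_univ,
      Fintype.card_fin]
  rw [this, mul_comm]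

private lemma rearrange' {N d : ℕ} (E : Finset (Fin N × Fin N)) (y : Fin N → Fin d → ℝ)
    (lam : ℝ) (x : Fin N → Fin d → ℝ) :
    (-∑ n, ∑ i, x n i * y n i) + lam * ∑ e ∈ E, ∑ i, |x e.1 i - x e.2 i|
      = ∑ i, ((-∑ n, x n i * y n i) + lam * ∑ e ∈ E, |x e.1 i - x e.2 i|) := by
  rw [Finset.sum_add_distrib, ← Finset.sum_neg_distrib, ← Finset.mul_sum, Finset.sum_comm]
  congr 1
  simp only [Finset.sum_neg_distrib]
  rw [Finset.sum_comm]

/-- Coordinatewise thresholding map: `(X_η x)_i = 1` if `x i > η i`, else `-1`. -/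
noncomputable def thresh {d : ℕ} (η x : Fin d → ℝ) : Fin d → ℝ :=
  fun i => if η i < x i then 1 else -1

/-- Any minimizer `x*` of the convexified multi-binary TV model satisfies
`K(x*) = 2^{−d} ∫_{C_d} K(X_η(x*)) dη`. -/
theorem minimizer_objective_eq_average_thresholded {d N : ℕ} (hd : 1 ≤ d)
    (E : Finset (Fin N × Fin N)) (y : Fin N → Fin d → ℝ) (lam : ℝ) (hlam : 0 < lam)
    (K : (Fin N → Fin d → ℝ) → ℝ)
    (hK : K = fun x =>
      (-∑ n, ∑ i, x n i * y n i) +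
        lam * ∑ e ∈ E, ∑ i, |x e.1 i - x e.2 i|)
    (C : Set (Fin N → Fin d → ℝ))
    (hC : C = {x | ∀ n, x n ∈ Set.Icc (-1 : Fin d → ℝ) 1})
    (xstar : Fin N → Fin d → ℝ) (hxC : xstar ∈ C) (hmin : IsMinOn K C xstar) :
    K xstar = (2 : ℝ) ^ (-(d : ℤ)) *
      ∫ η in Set.Icc (-1 : Fin d → ℝ) 1, K (fun n => thresh η (xstar n)) := by
  subst hK hC
  -- coordinates of xstar lie in [-1,1]
  have hx : ∀ n i, -1 ≤ xstar n i ∧ xstar n i ≤ 1 := by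
    intro n i
    have h := hxC n
    rw [Set.mem_Icc] at h
    exact ⟨h.1 i, h.2 i⟩
  -- the one-dimensional coordinate functions
  set g : Fin d → ℝ → ℝ := fun i t =>
    (-∑ n, (if t < xstar n i then (1:ℝ) else -1) * y n i)
    + lam * ∑ e ∈ E, |(if t < xstar e.1 i then (1:ℝ) else -1)
        - (if t < xstar e.2 i then 1 else -1)| with hgdef
  -- elementary 1-d integrabilities and integrals
  have hint1 : ∀ a c : ℝ, Integrable (fun t => (if t < a then (1:ℝ) else -1) * c)
      (volume.restrict (Set.Icc (-1:ℝ) 1)) := by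
    intro a c
    have h : (fun t : ℝ => (if t < a then (1:ℝ) else -1) * c)
        = fun t => if t < a then c else -c := by
      funext t; split_ifs <;> ring
    rw [h]; exact step_integrable' _ _ _
  have hval1 : ∀ a c : ℝ, -1 ≤ a → a ≤ 1 →
      ∫ t in Set.Icc (-1:ℝ) 1, (if t < a then (1:ℝ) else -1) * c = 2*(a*c) := by
    intro a c h1 h2
    have h : (fun t : ℝ => (if t < a then (1:ℝ) else -1) * c)
        = fun t => if t < a then c else -c := by
      funext t; split_ifs <;> ring
    rw [h, step_integral' a c (-c) h1 h2]; ring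
  have hint2 : ∀ a b : ℝ, Integrable
      (fun t => |(if t < a then (1:ℝ) else -1) - (if t < b then 1 else -1)|)
      (volume.restrict (Set.Icc (-1:ℝ) 1)) := by
    intro a b
    have h : (fun t : ℝ => |(if t < a then (1:ℝ) else -1) - (if t < b then 1 else -1)|)
        = fun t => (if t < max a b then (1:ℝ) else -1) - (if t < min a b then 1 else -1) :=
      funext fun t => abs_thresh' a b t
    rw [h]; exact (step_integrable' _ _ _).sub (step_integrable' _ _ _)
  have hval2 : ∀ a b : ℝ, -1 ≤ a → a ≤ 1 → -1 ≤ b → b ≤ 1 →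
      ∫ t in Set.Icc (-1:ℝ) 1,
        |(if t < a then (1:ℝ) else -1) - (if t < b then 1 else -1)| = 2*|a - b| := by
    intro a b ha1 ha2 hb1 hb2
    have h : (fun t : ℝ => |(if t < a then (1:ℝ) else -1) - (if t < b then 1 else -1)|)
        = fun t => (if t < max a b then (1:ℝ) else -1) - (if t < min a b then 1 else -1) :=
      funext fun t => abs_thresh' a b t
    rw [h, integral_sub (step_integrable' _ _ _) (step_integrable' _ _ _),
      step_integral' (max a b) 1 (-1) (le_trans ha1 (le_max_left a b)) (max_le ha2 hb2),
      step_integral' (min a b) 1 (-1) (le_min ha1 hb1) (le_trans (min_le_left a b) ha2),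
      ← max_sub_min_eq_abs]
    rcases le_total a b with h' | h' <;>
      simp only [max_eq_right h', min_eq_left h', max_eq_left h', min_eq_right h'] <;> ring
  -- integrability of g i on [-1,1]
  have hIg : ∀ i, Integrable (g i) (volume.restrict (Set.Icc (-1:ℝ) 1)) := by
    intro i
    refine Integrable.add (Integrable.neg ?_) (Integrable.const_mul ?_ lam)
    · exact integrable_finset_sum _ (fun n _ => hint1 _ _)
    · exact integrable_finset_sum _ (fun e _ => hint2 _ _)
  -- value of the 1-d integral of g i
  have hval : ∀ i, ∫ t in Set.Icc (-1:ℝ) 1, g i t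
      = 2 * ((-∑ n, xstar n i * y n i) + lam * ∑ e ∈ E, |xstar e.1 i - xstar e.2 i|) := by
    intro i
    simp only [hgdef]
    have hA : Integrable (fun t : ℝ => -∑ n, (if t < xstar n i then (1:ℝ) else -1) * y n i)
        (volume.restrict (Set.Icc (-1:ℝ) 1)) :=
      (integrable_finset_sum _ (fun n _ => hint1 _ _)).neg
    have hB : Integrable (fun t : ℝ => lam * ∑ e ∈ E, |(if t < xstar e.1 i then (1:ℝ) else -1)
        - (if t < xstar e.2 i then 1 else -1)|) (volume.restrict (Set.Icc (-1:ℝ) 1)) :=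
      (integrable_finset_sum _ (fun e _ => hint2 _ _)).const_mul lam
    rw [integral_add hA hB,
      integral_neg, integral_finset_sum _ (fun n _ => hint1 _ _),
      integral_const_mul lam _, integral_finset_sum _ (fun e _ => hint2 _ _)]
    rw [Finset.sum_congr rfl (fun n _ => hval1 _ _ (hx n i).1 (hx n i).2),
      Finset.sum_congr rfl (fun e _ => hval2 _ _ (hx e.1 i).1 (hx e.1 i).2
        (hx e.2 i).1 (hx e.2 i).2)]
    simp only [← Finset.mul_sum]
    ring
  -- measurability of g i
  have hmeas : ∀ i, Measurable (g i) := by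
    intro i
    apply Measurable.add
    · exact (Finset.measurable_sum _ (fun n _ =>
        (Measurable.ite measurableSet_Iio measurable_const measurable_const).mul_const _)).neg
    · exact ((Finset.measurable_sum _ (fun e _ =>
        ((Measurable.ite measurableSet_Iio measurable_const measurable_const).sub
          (Measurable.ite measurableSet_Iio measurable_const measurable_const)).abs))).const_mul lam
  -- pointwise bound on g i
  have hbd : ∀ i t, ‖g i t‖ ≤ (∑ n, |y n i|) + |lam| * (2 * E.card) := by
    intro i t
    simp only [Real.norm_eq_abs, hgdef]
    refine le_trans (abs_add_le _ _) (add_le_add ?_ ?_)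
    · rw [abs_neg]
      refine le_trans (Finset.abs_sum_le_sum_abs _ _) (Finset.sum_le_sum fun n _ => ?_)
      rw [abs_mul]
      have : |if t < xstar n i then (1:ℝ) else -1| = 1 := by split_ifs <;> norm_num
      rw [this, one_mul]
    · rw [abs_mul]
      refine mul_le_mul_of_nonneg_left ?_ (abs_nonneg lam)
      refine le_trans (Finset.abs_sum_le_sum_abs _ _) ?_
      have h2 : ∀ e ∈ E, abs (abs ((if t < xstar e.1 i then (1:ℝ) else -1)
          - (if t < xstar e.2 i then 1 else -1))) ≤ 2 := by
        intro e _
        rw [abs_abs]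
        refine le_trans (abs_sub _ _) ?_
        have h1 : |if t < xstar e.1 i then (1:ℝ) else -1| = 1 := by split_ifs <;> norm_num
        have h2 : |if t < xstar e.2 i then (1:ℝ) else -1| = 1 := by split_ifs <;> norm_num
        rw [h1, h2]; norm_num
      calc ∑ e ∈ E, abs (abs ((if t < xstar e.1 i then (1:ℝ) else -1)
            - (if t < xstar e.2 i then 1 else -1))) ≤ ∑ _e ∈ E, (2:ℝ) :=
          Finset.sum_le_sum h2
        _ = 2 * E.card := by rw [Finset.sum_const, nsmul_eq_mul]; ring
  -- integrability of η ↦ g i (η i) on the box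
  have hfinbox : volume (Set.Icc (-1 : Fin d → ℝ) 1) < ⊤ :=
    isCompact_Icc.measure_lt_top
  have hIG : ∀ i, Integrable (fun η : Fin d → ℝ => g i (η i))
      (volume.restrict (Set.Icc (-1 : Fin d → ℝ) 1)) := by
    intro i
    refine Integrable.mono' (g := fun _ => (∑ n, |y n i|) + |lam| * (2 * E.card))
      (integrableOn_const hfinbox.ne)
      ((hmeas i).comp (measurable_pi_apply i)).aestronglyMeasurable
      (Filter.Eventually.of_forall fun η => hbd i (η i))
  -- main computation of the integral
  have key : (∫ η in Set.Icc (-1 : Fin d → ℝ) 1,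
      ((-∑ n, ∑ i, thresh η (xstar n) i * y n i) +
        lam * ∑ e ∈ E, ∑ i, |thresh η (xstar e.1) i - thresh η (xstar e.2) i|))
      = 2^d * ∑ i, ((-∑ n, xstar n i * y n i)
          + lam * ∑ e ∈ E, |xstar e.1 i - xstar e.2 i|) := by
    have hfun : (fun η : Fin d → ℝ =>
        ((-∑ n, ∑ i, thresh η (xstar n) i * y n i) +
          lam * ∑ e ∈ E, ∑ i, |thresh η (xstar e.1) i - thresh η (xstar e.2) i|))
        = fun η => ∑ i, g i (η i) := by
      funext η
      rw [rearrange' E y lam (fun n => thresh η (xstar n))]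
      rfl
    rw [hfun, integral_finset_sum _ (fun i _ => hIG i),
      Finset.sum_congr rfl (fun i _ => by rw [integral_coord' i (g i), hval i])]
    have h2 : (2:ℝ)^(d-1) * 2 = 2^d := by
      rw [← pow_succ, Nat.sub_add_cancel hd]
    rw [Finset.sum_congr rfl (fun i (_ : i ∈ Finset.univ) => by
        rw [← mul_assoc, h2]), ← Finset.mul_sum]
  -- conclude
  beta_reduce
  show (-∑ n, ∑ i, xstar n i * y n i) + lam * ∑ e ∈ E, ∑ i, |xstar e.1 i - xstar e.2 i|
      = (2 : ℝ) ^ (-(d : ℤ)) * ∫ η in Set.Icc (-1 : Fin d → ℝ) 1,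
        ((-∑ n, ∑ i, thresh η (xstar n) i * y n i) +
          lam * ∑ e ∈ E, ∑ i, |thresh η (xstar e.1) i - thresh η (xstar e.2) i|)
  rw [key, rearrange' E y lam xstar, ← mul_assoc]
  have h1 : (2:ℝ) ^ (-(d:ℤ)) * 2^d = 1 := by
    rw [zpow_neg, ← zpow_natCast (2:ℝ) d]
    exact inv_mul_cancel₀ (zpow_ne_zero _ two_ne_zero)
  rw [h1, one_mul]
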